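/- For any g ∈ ℝ, u ∈ [0,1], γ > 0, σ > 0 and 0 ≤ a ≤ b, one has H_γ(a,g,u) ≤ H_γ(b,g,u), where H_γ(c,g,u) = 1_{[0,∞)}(u − p̄(c,g)) · (c − 2(σ²γ)^{1/2} g) and p̄(c,g) = min(1, φ_{σ²γ}(c − (σ²γ)^{1/2} g)/φ_{σ²γ}((σ²γ)^{1/2} g)). -/

import Mathlib

open MeasureTheory

/-- Density of the one-dimensional centered Gaussian with variance `v`. -/
noncomputable def gpdf (v x : ℝ) : ℝ :=
  (Real.sqrt (2 * Real.pi * v))⁻¹ * Real.exp (-x ^ 2 / (2 * v))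

/-- `p̄(c, g) = min(1, φ_v(c − √v g) / φ_v(√v g))` with `v = σ²γ`. -/
noncomputable def pbar (v c g : ℝ) : ℝ :=
  min 1 (gpdf v (c - Real.sqrt v * g) / gpdf v (Real.sqrt v * g))

/-- `H_γ(c, g, u) = 1_{[0,∞)}(u − p̄(c,g)) · (c − 2 √(σ²γ) g)`. -/
noncomputable def Hfun (σ γ c g u : ℝ) : ℝ :=
  (if 0 ≤ u - pbar (σ ^ 2 * γ) c g then (1 : ℝ) else 0) *
    (c - 2 * Real.sqrt (σ ^ 2 * γ) * g)

/-! The Gaussian density ratio in `p̄(c, g)` is `exp (c (2√v g - c) / 2v)`: the exponent is a concave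
parabola in `c` vanishing at `0` and `2√v g`, so `p̄ = 1` between these roots and `p̄` decreases
beyond the vertex `√v g`. Hence `H` is `c - 2√v g` times a fixed indicator while `c ≤ 2√v g`, changes
sign from nonpositive to nonnegative at `c = 2√v g`, and is a product of two nonnegative monotone
factors beyond. -/

section pbar

variable {v c g : ℝ}

theorem pbar_eq_min_exp (hv : 0 < v) :
    pbar v c g = min 1 (Real.exp (c * (2 * Real.sqrt v * g - c) / (2 * v))) := by
  have hnorm : (Real.sqrt (2 * Real.pi * v))⁻¹ ≠ 0 := by
    have : 0 < Real.sqrt (2 * Real.pi * v) := Real.sqrt_pos.2 (by positivity)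
    positivity
  unfold pbar gpdf
  rw [mul_div_mul_left _ _ hnorm, ← Real.exp_sub]
  congr 2
  field_simp
  ring

theorem pbar_eq_one (hv : 0 < v) (hc : 0 ≤ c) (hcg : c ≤ 2 * Real.sqrt v * g) :
    pbar v c g = 1 := by
  rw [pbar_eq_min_exp hv]
  refine min_eq_left (Real.one_le_exp ?_)
  have : 0 ≤ c * (2 * Real.sqrt v * g - c) := mul_nonneg hc (by linarith)
  positivity

theorem pbar_antitoneOn (hv : 0 < v) :
    AntitoneOn (fun c => pbar v c g) (Set.Ici (Real.sqrt v * g)) := by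
  intro a ha b hb hab
  simp only [Set.mem_Ici] at ha hb
  simp only [pbar_eq_min_exp hv]
  refine min_le_min le_rfl (Real.exp_le_exp.2 (div_le_div_of_nonneg_right ?_ (by positivity)))
  nlinarith [mul_nonneg (sub_nonneg.2 hab) (by linarith : 0 ≤ a + b - 2 * Real.sqrt v * g)]

end pbar

theorem ite_mul_le_ite_mul {u p q x y : ℝ} (hqp : q ≤ p) (hx : 0 ≤ x) (hxy : x ≤ y) :
    (if 0 ≤ u - p then (1 : ℝ) else 0) * x ≤ (if 0 ≤ u - q then (1 : ℝ) else 0) * y := by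
  have hind : (if 0 ≤ u - p then (1 : ℝ) else 0) ≤ if 0 ≤ u - q then 1 else 0 := by
    split_ifs with hp hq
    · exact le_rfl
    · exact absurd (by linarith) hq
    · exact zero_le_one
    · exact le_rfl
  exact mul_le_mul hind hxy hx (ite_nonneg zero_le_one le_rfl)

theorem Hfun_mono_general (σ γ g u a b : ℝ) (hσ : 0 < σ) (hγ : 0 < γ)
    (ha : 0 ≤ a) (hab : a ≤ b) :
    Hfun σ γ a g u ≤ Hfun σ γ b g u := by
  have hv : 0 < σ ^ 2 * γ := by positivity
  have hb : 0 ≤ b := ha.trans hab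
  have hind {p : ℝ} : (0 : ℝ) ≤ if 0 ≤ u - p then 1 else 0 := ite_nonneg zero_le_one le_rfl
  unfold Hfun
  set s := Real.sqrt (σ ^ 2 * γ)
  rcases le_total b (2 * s * g) with hbk | hkb
  · rw [pbar_eq_one hv ha (hab.trans hbk), pbar_eq_one hv hb hbk]
    exact mul_le_mul_of_nonneg_left (by linarith) hind
  rcases le_total a (2 * s * g) with hak | hka
  · exact (mul_nonpos_of_nonneg_of_nonpos hind (by linarith)).trans
      (mul_nonneg hind (by linarith))
  · have hsa : s * g ≤ a := by linarith
    exact ite_mul_le_ite_mul (pbar_antitoneOn hv hsa (hsa.trans hab) hab) (by linarith)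
      (by linarith)

theorem Hfun_mono (σ γ g u a b : ℝ) (hσ : 0 < σ) (hγ : 0 < γ)
    (hu : u ∈ Set.Icc (0 : ℝ) 1) (ha : 0 ≤ a) (hab : a ≤ b) :
    Hfun σ γ a g u ≤ Hfun σ γ b g u :=
  Hfun_mono_general σ γ g u a b hσ hγ ha hab
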